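/- arXiv:1902.09182 — 3 statements merged into one kernel-verified Lean document; each statement's English description precedes it below -/
import Mathlib

section
/- Let i : A → A ∪ {v} be an unfold, say with N_{A∪{v}}(v) ⊆ N_{A∪{v}}(v′) for a vertex v′ ∈ V(A), and let f : A → C be any graph map. Then the cobase change i′ : C → G of i along f (where G is the pushout of i and f) is an unfold: G is obtained from C (embedded as an induced subgraph) by adding the single new vertex [v], and N_G([v]) ⊆ N_G([f(v′)]). -/
/-- A graph: vertex type `V` with a symmetric adjacency relation; loops are allowed. -/
structure LoopGraph (V : Type) : Type where
  adj : V → V → Prop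
  symm : ∀ {x y : V}, adj x y → adj y x

/-- A graph map: a vertex function preserving edges. -/
def IsGraphHom {V W : Type} (G : LoopGraph V) (H : LoopGraph W) (f : V → W) : Prop :=
  ∀ ⦃x y : V⦄, G.adj x y → H.adj (f x) (f y)

/-- The categorical product of graphs. -/
def LoopGraph.prod {V W : Type} (G : LoopGraph V) (H : LoopGraph W) : LoopGraph (V × W) where
  adj p q := G.adj p.1 q.1 ∧ H.adj p.2 q.2
  symm h := ⟨G.symm h.1, H.symm h.2⟩

/-- The graph `I_n` on vertices `{0,…,n}` with `i ~ j` iff `|i-j| ≤ 1` (all vertices looped). -/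
def pathI (n : ℕ) : LoopGraph (Fin (n + 1)) where
  adj i j := (i : ℕ) ≤ (j : ℕ) + 1 ∧ (j : ℕ) ≤ (i : ℕ) + 1
  symm h := ⟨h.2, h.1⟩

/-- `f` and `g` are ×-homotopic. -/
def Homotopic {V W : Type} (G : LoopGraph V) (H : LoopGraph W) (f g : V → W) : Prop :=
  ∃ (n : ℕ) (F : V × Fin (n + 1) → W),
    IsGraphHom (G.prod (pathI n)) H F ∧ (∀ a, F (a, 0) = f a) ∧ (∀ a, F (a, Fin.last n) = g a)

/-- `f` is a ×-homotopy equivalence. -/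
def IsHtpyEquiv {V W : Type} (G : LoopGraph V) (H : LoopGraph W) (f : V → W) : Prop :=
  IsGraphHom G H f ∧ ∃ g : W → V, IsGraphHom H G g ∧
    Homotopic G G (g ∘ f) id ∧ Homotopic H H (f ∘ g) id

/-- A graph is connected if any two vertices are joined by a path of edges. -/
def LoopGraph.Connected {V : Type} (G : LoopGraph V) : Prop :=
  ∀ x y : V, Relation.ReflTransGen G.adj x y

/-- `i : A → B` is an unfold: an induced-subgraph inclusion adding exactly one new vertex `v`
with `N(v) ⊆ N(i v')` for some vertex `v'` of `A`. -/
def IsUnfold {A B : Type} (GA : LoopGraph A) (GB : LoopGraph B) (i : A → B) : Prop :=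
  Function.Injective i ∧ (∀ x y : A, GA.adj x y ↔ GB.adj (i x) (i y)) ∧
  ∃ v : B, v ∉ Set.range i ∧ (∀ b : B, b ∉ Set.range i → b = v) ∧
    ∃ v' : A, ∀ b : B, GB.adj v b → GB.adj (i v') b

/-- Relation generating the pushout of `i : A → B` along `f : A → C`. -/
def pushoutRel {A B C : Type} (i : A → B) (f : A → C) : B ⊕ C → B ⊕ C → Prop :=
  fun x y => ∃ a : A, x = Sum.inl (i a) ∧ y = Sum.inr (f a)

/-- Vertex set of the pushout. -/
def Pushout {A B C : Type} (i : A → B) (f : A → C) : Type :=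
  Quot (pushoutRel i f)

/-- Adjacency on a disjoint union. -/
def sumAdj {B C : Type} (GB : LoopGraph B) (GC : LoopGraph C) (x y : B ⊕ C) : Prop :=
  (∃ b b', x = Sum.inl b ∧ y = Sum.inl b' ∧ GB.adj b b') ∨
  (∃ c c', x = Sum.inr c ∧ y = Sum.inr c' ∧ GC.adj c c')

/-- The pushout graph of `i : A → B` along `f : A → C`: classes are adjacent iff some
representatives are adjacent in `B` or in `C`. -/
def pushoutGraph {A B C : Type} (GB : LoopGraph B) (GC : LoopGraph C) (i : A → B) (f : A → C) :
    LoopGraph (Pushout i f) where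
  adj x y := ∃ u v : B ⊕ C,
    Quot.mk (pushoutRel i f) u = x ∧ Quot.mk (pushoutRel i f) v = y ∧ sumAdj GB GC u v
  symm := by
    rintro x y ⟨u, v, hu, hv, h⟩
    refine ⟨v, u, hv, hu, ?_⟩
    rcases h with ⟨b, b', rfl, rfl, hbb⟩ | ⟨c, c', rfl, rfl, hcc⟩
    · exact Or.inl ⟨b', b, rfl, rfl, GB.symm hbb⟩
    · exact Or.inr ⟨c', c, rfl, rfl, GC.symm hcc⟩

/-- The cobase change `C → B ⊔_A C` of `i` along `f`. -/
def cobase {A B C : Type} (i : A → B) (f : A → C) : C → Pushout i f :=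
  fun c => Quot.mk (pushoutRel i f) (Sum.inr c)

/-- The map `a ↦ (a,0)` into the cylinder `A × I_n`. -/
def cyl0 {A : Type} (n : ℕ) : A → A × Fin (n + 1) := fun a => (a, 0)

/-- The canonical map `(A × I_n) ⊔_i B → B × I_n`, induced by `(a,t) ↦ (i a, t)`, `b ↦ (b,0)`. -/
def cylJ {A B : Type} (i : A → B) (n : ℕ) : Pushout (cyl0 (A := A) n) i → B × Fin (n + 1) :=
  Quot.lift (Sum.elim (fun p => (i p.1, p.2)) (fun b => (b, (0 : Fin (n + 1)))))
    (by rintro x y ⟨a, rfl, rfl⟩; rfl)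

/-- `i : A → B` has the homotopy extension property for homotopies of length `n`. -/
def HEP {A B : Type} (GA : LoopGraph A) (GB : LoopGraph B) (i : A → B) (n : ℕ) : Prop :=
  ∀ (Z : Type) (GZ : LoopGraph Z) (f : A → Z) (g : B → Z),
    IsGraphHom GA GZ f → IsGraphHom GB GZ g → (∀ a, g (i a) = f a) →
    ∀ F : A × Fin (n + 1) → Z, IsGraphHom (GA.prod (pathI n)) GZ F → (∀ a, F (a, 0) = f a) →
    ∃ G : B × Fin (n + 1) → Z, IsGraphHom (GB.prod (pathI n)) GZ G ∧
      (∀ b, G (b, 0) = g b) ∧ (∀ a t, G (i a, t) = F (a, t))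

/-- `FoldsTo G S`: the graph `G` can be reduced by a finite sequence of folds to the
induced subgraph on the vertex set `S`. -/
inductive FoldsTo {V : Type} (G : LoopGraph V) : Set V → Prop
  | univ : FoldsTo G Set.univ
  | step {S : Set V} {v v' : V} : FoldsTo G S → v ∈ S → v' ∈ S → v ≠ v' →
      (∀ x ∈ S, G.adj v x → G.adj v' x) → FoldsTo G (S \ {v})

/-- `RelFoldsTo G A S`: `G` can be reduced to the induced subgraph on `S` by a finite
sequence of folds relative to `A` (never removing a vertex of `A`). -/
inductive RelFoldsTo {V : Type} (G : LoopGraph V) (A : Set V) : Set V → Prop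
  | univ : RelFoldsTo G A Set.univ
  | step {S : Set V} {v v' : V} : RelFoldsTo G A S → v ∈ S → v ∉ A → v' ∈ S → v ≠ v' →
      (∀ x ∈ S, G.adj v x → G.adj v' x) → RelFoldsTo G A (S \ {v})

/-- `p : X → Y` has the right lifting property with respect to every unfold. -/
def RLPunfolds {X Y : Type} (GX : LoopGraph X) (GY : LoopGraph Y) (p : X → Y) : Prop :=
  ∀ (A B : Type) (GA : LoopGraph A) (GB : LoopGraph B) (i : A → B), IsUnfold GA GB i →
    ∀ (f : A → X) (g : B → Y), IsGraphHom GA GX f → IsGraphHom GB GY g →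
      (∀ a, p (f a) = g (i a)) →
      ∃ h : B → X, IsGraphHom GB GX h ∧ (∀ a, h (i a) = f a) ∧ ∀ b, p (h b) = g b

/-- The graph `L_n`: the path `0 - 1 - ⋯ - n` with a loop at `0`. -/
def Lgraph (t : ℕ) : LoopGraph (Fin (t + 1)) where
  adj x y := ((x : ℕ) + 1 = (y : ℕ) ∨ (y : ℕ) + 1 = (x : ℕ)) ∨ ((x : ℕ) = 0 ∧ (y : ℕ) = 0)
  symm := by tauto

/-- The graph `I_0`: a single looped vertex. -/
def I0 : LoopGraph Unit where
  adj _ _ := True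
  symm h := h

/-- The constant graph map `p_n : L_n → I_0`. -/
def pL (n : ℕ) : Fin (n + 1) → Unit := fun _ => ()

/-- An object of the category of finite graphs. -/
structure FinGraph : Type where
  n : ℕ
  G : LoopGraph (Fin n)

/-- A class of morphisms in the category of finite graphs. -/
def MorClass : Type :=
  ∀ (A B : FinGraph), (Fin A.n → Fin B.n) → Prop

/-- `f : A → B` is a retract of `g : X → Y` in the arrow category. -/
def IsRetractOf (A B X Y : FinGraph) (f : Fin A.n → Fin B.n) (g : Fin X.n → Fin Y.n) : Prop :=
  ∃ (iA : Fin A.n → Fin X.n) (rA : Fin X.n → Fin A.n)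
    (iB : Fin B.n → Fin Y.n) (rB : Fin Y.n → Fin B.n),
    IsGraphHom A.G X.G iA ∧ IsGraphHom X.G A.G rA ∧
    IsGraphHom B.G Y.G iB ∧ IsGraphHom Y.G B.G rB ∧
    (∀ a, rA (iA a) = a) ∧ (∀ b, rB (iB b) = b) ∧
    (∀ a, g (iA a) = iB (f a)) ∧ (∀ x, f (rA x) = rB (g x))

/-- A class of morphisms is closed under retracts. -/
def RetractClosed (S : MorClass) : Prop :=
  ∀ (A B X Y : FinGraph) (f : Fin A.n → Fin B.n) (g : Fin X.n → Fin Y.n),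
    IsGraphHom A.G B.G f → IsGraphHom X.G Y.G g →
    IsRetractOf A B X Y f g → S X Y g → S A B f

/-- `i` has the left lifting property with respect to `p` (in the category of finite graphs). -/
def HasLift (A B X Y : FinGraph) (i : Fin A.n → Fin B.n) (p : Fin X.n → Fin Y.n) : Prop :=
  ∀ (f : Fin A.n → Fin X.n) (g : Fin B.n → Fin Y.n),
    IsGraphHom A.G X.G f → IsGraphHom B.G Y.G g → (∀ a, p (f a) = g (i a)) →
    ∃ h : Fin B.n → Fin X.n, IsGraphHom B.G X.G h ∧ (∀ a, h (i a) = f a) ∧ ∀ b, p (h b) = g b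

/-- A model structure on the category of finite graphs: classes `W`, `Cof`, `Fib` of graph maps,
each closed under retracts, with two-out-of-three for `W`, the lifting axioms, and the two
factorization axioms. -/
structure ModelStructure (W Cof Fib : MorClass) : Prop where
  w_hom : ∀ A B f, W A B f → IsGraphHom A.G B.G f
  c_hom : ∀ A B f, Cof A B f → IsGraphHom A.G B.G f
  f_hom : ∀ A B f, Fib A B f → IsGraphHom A.G B.G f
  w_retract : RetractClosed W
  c_retract : RetractClosed Cof
  f_retract : RetractClosed Fib
  two_of_three_comp : ∀ (A B D : FinGraph) (f : Fin A.n → Fin B.n) (g : Fin B.n → Fin D.n),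
    IsGraphHom A.G B.G f → IsGraphHom B.G D.G g → W A B f → W B D g → W A D (g ∘ f)
  two_of_three_right : ∀ (A B D : FinGraph) (f : Fin A.n → Fin B.n) (g : Fin B.n → Fin D.n),
    IsGraphHom A.G B.G f → IsGraphHom B.G D.G g → W A B f → W A D (g ∘ f) → W B D g
  two_of_three_left : ∀ (A B D : FinGraph) (f : Fin A.n → Fin B.n) (g : Fin B.n → Fin D.n),
    IsGraphHom A.G B.G f → IsGraphHom B.G D.G g → W B D g → W A D (g ∘ f) → W A B f
  lift_cw_f : ∀ (A B X Y : FinGraph) (i : Fin A.n → Fin B.n) (p : Fin X.n → Fin Y.n),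
    Cof A B i → W A B i → Fib X Y p → HasLift A B X Y i p
  lift_c_fw : ∀ (A B X Y : FinGraph) (i : Fin A.n → Fin B.n) (p : Fin X.n → Fin Y.n),
    Cof A B i → Fib X Y p → W X Y p → HasLift A B X Y i p
  fact_c_fw : ∀ (A B : FinGraph) (f : Fin A.n → Fin B.n), IsGraphHom A.G B.G f →
    ∃ (Z : FinGraph) (c : Fin A.n → Fin Z.n) (p : Fin Z.n → Fin B.n),
      Cof A Z c ∧ Fib Z B p ∧ W Z B p ∧ ∀ a, p (c a) = f a
  fact_cw_f : ∀ (A B : FinGraph) (f : Fin A.n → Fin B.n), IsGraphHom A.G B.G f →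
    ∃ (Z : FinGraph) (c : Fin A.n → Fin Z.n) (p : Fin Z.n → Fin B.n),
      Cof A Z c ∧ W A Z c ∧ Fib Z B p ∧ ∀ a, p (c a) = f a

/-- The class of ×-homotopy equivalences of finite graphs. -/
def Whe : MorClass := fun A B f => IsHtpyEquiv A.G B.G f

/- The pushout along an injective `i` is `C` with the vertices of `B \ range i` adjoined, each
forming a singleton class (`Pushout.toSum` separates the two parts). Hence `C`
embeds as an induced subgraph (edges of `B` between vertices of `range i` come from edges of `A`,
which `f` maps to edges of `C`), `[v]` is the only new vertex, and the fold `N(v) ⊆ N(i v')`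
of `B` persists in the pushout because the class of `v` is `{v}`. -/

namespace Pushout

variable {A B C : Type} {i : A → B} {f : A → C}

open Function Set

theorem mk_inl_apply (a : A) :
    Quot.mk (pushoutRel i f) (.inl (i a)) = cobase i f (f a) :=
  Quot.sound ⟨a, rfl, rfl⟩

theorem exists_eq_mk_inl_of_notMem_range_cobase {x : Pushout i f}
    (hx : x ∉ range (cobase i f)) : ∃ b ∉ range i, x = Quot.mk (pushoutRel i f) (.inl b) := by
  induction x using Quot.ind with
  | mk u =>
    rcases u with b | c
    · refine ⟨b, ?_, rfl⟩
      rintro ⟨a, rfl⟩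
      exact hx ⟨f a, (mk_inl_apply a).symm⟩
    · exact absurd ⟨c, rfl⟩ hx

noncomputable def toSum (hi : Injective i) (f : A → C) : Pushout i f → C ⊕ B :=
  Quot.lift (Sum.elim (extend i (Sum.inl ∘ f) Sum.inr) Sum.inl) <| by
    rintro _ _ ⟨a, rfl, rfl⟩
    exact hi.extend_apply _ _ a

theorem toSum_cobase (hi : Injective i) (c : C) : toSum hi f (cobase i f c) = .inl c :=
  rfl

theorem toSum_mk_inl_apply (hi : Injective i) (a : A) :
    toSum hi f (Quot.mk _ (.inl (i a))) = .inl (f a) :=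
  hi.extend_apply _ _ a

theorem toSum_mk_inl_of_notMem_range (hi : Injective i) {b : B} (hb : b ∉ range i) :
    toSum hi f (Quot.mk _ (.inl b)) = .inr b :=
  extend_apply' _ _ _ hb

theorem cobase_injective (hi : Injective i) : Injective (cobase i f) := fun c c' h =>
  Sum.inl_injective <| by rw [← toSum_cobase hi, h, toSum_cobase]

theorem exists_apply_eq_of_mk_inl_eq_cobase (hi : Injective i) {b : B} {c : C}
    (h : Quot.mk _ (.inl b) = cobase i f c) : ∃ a, i a = b ∧ f a = c := by
  have h' := congrArg (toSum hi f) h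
  by_cases hb : b ∈ range i
  · obtain ⟨a, rfl⟩ := hb
    rw [toSum_mk_inl_apply, toSum_cobase] at h'
    exact ⟨a, rfl, Sum.inl_injective h'⟩
  · rw [toSum_mk_inl_of_notMem_range hi hb, toSum_cobase] at h'
    exact absurd h' Sum.inr_ne_inl

theorem mk_inl_notMem_range_cobase (hi : Injective i) {b : B} (hb : b ∉ range i) :
    Quot.mk (pushoutRel i f) (.inl b) ∉ range (cobase i f) := by
  rintro ⟨c, hc⟩
  obtain ⟨a, rfl, -⟩ := exists_apply_eq_of_mk_inl_eq_cobase hi hc.symm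
  exact hb ⟨a, rfl⟩

theorem eq_inl_of_mk_eq_mk_inl (hi : Injective i) {b : B} (hb : b ∉ range i) {u : B ⊕ C}
    (h : Quot.mk (pushoutRel i f) u = Quot.mk _ (.inl b)) : u = .inl b := by
  rcases u with b' | c
  · by_cases hb' : b' ∈ range i
    · obtain ⟨a, rfl⟩ := hb'
      exact absurd ⟨f a, by rw [← h, mk_inl_apply]⟩ (mk_inl_notMem_range_cobase hi hb)
    · have h' := congrArg (toSum hi f) h
      rw [toSum_mk_inl_of_notMem_range hi hb', toSum_mk_inl_of_notMem_range hi hb] at h'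
      exact congrArg Sum.inl (Sum.inr_injective h')
  · exact absurd ⟨c, h⟩ (mk_inl_notMem_range_cobase hi hb)

end Pushout

section PushoutGraph

variable {A B C : Type} {GA : LoopGraph A} {GB : LoopGraph B} {GC : LoopGraph C}
  {i : A → B} {f : A → C}

open Function Set Pushout

theorem pushoutGraph_adj_cobase_iff (hi : Injective i)
    (hreflect : ∀ a a' : A, GB.adj (i a) (i a') → GA.adj a a') (hf : IsGraphHom GA GC f)
    (c c' : C) :
    (pushoutGraph GB GC i f).adj (cobase i f c) (cobase i f c') ↔ GC.adj c c' := by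
  refine ⟨?_, fun h => ⟨.inr c, .inr c', rfl, rfl, .inr ⟨c, c', rfl, rfl, h⟩⟩⟩
  rintro ⟨u, w, hu, hw, ⟨b, b', rfl, rfl, hbb'⟩ | ⟨d, d', rfl, rfl, hdd'⟩⟩
  · obtain ⟨a, rfl, rfl⟩ := exists_apply_eq_of_mk_inl_eq_cobase hi hu
    obtain ⟨a', rfl, rfl⟩ := exists_apply_eq_of_mk_inl_eq_cobase hi hw
    exact hf (hreflect a a' hbb')
  · rwa [← cobase_injective hi hu, ← cobase_injective hi hw]

theorem pushoutGraph_adj_mk_inl_of_adj_imp (hi : Injective i) {b b' : B} (hb : b ∉ range i)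
    (hfold : ∀ x : B, GB.adj b x → GB.adj b' x) {x : Pushout i f}
    (hx : (pushoutGraph GB GC i f).adj (Quot.mk _ (.inl b)) x) :
    (pushoutGraph GB GC i f).adj (Quot.mk _ (.inl b')) x := by
  obtain ⟨u, w, hu, hw, hadj⟩ := hx
  obtain rfl := eq_inl_of_mk_eq_mk_inl hi hb hu
  rcases hadj with ⟨_, b'', ⟨⟩, rfl, hbb''⟩ | ⟨_, _, ⟨⟩, -, -⟩
  exact ⟨.inl b', .inl b'', rfl, hw, .inl ⟨b', b'', rfl, rfl, hfold b'' hbb''⟩⟩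

end PushoutGraph

/-- the cobase change of an unfold `i : A → A ∪ {v}` (with `N(v) ⊆ N(i v')`)
along any graph map `f : A → C` is an unfold: the pushout is obtained from `C` (embedded as an
induced subgraph) by adding the single new vertex `[v]`, and `N([v]) ⊆ N([f v'])`. -/
theorem stmt6 {A B C : Type} (GA : LoopGraph A) (GB : LoopGraph B) (GC : LoopGraph C)
    (i : A → B)
    (hind : Function.Injective i ∧ ∀ a a' : A, GA.adj a a' ↔ GB.adj (i a) (i a'))
    (v : B) (hv : v ∉ Set.range i) (honly : ∀ b : B, b ∉ Set.range i → b = v)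
    (v' : A) (hfold : ∀ b : B, GB.adj v b → GB.adj (i v') b)
    (f : A → C) (hf : IsGraphHom GA GC f) :
    Function.Injective (cobase i f) ∧
    (∀ c c' : C, GC.adj c c' ↔ (pushoutGraph GB GC i f).adj (cobase i f c) (cobase i f c')) ∧
    (Quot.mk (pushoutRel i f) (Sum.inl v) ∉ Set.range (cobase i f)) ∧
    (∀ x : Pushout i f, x ∉ Set.range (cobase i f) → x = Quot.mk (pushoutRel i f) (Sum.inl v)) ∧
    (∀ x : Pushout i f,
      (pushoutGraph GB GC i f).adj (Quot.mk (pushoutRel i f) (Sum.inl v)) x →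
        (pushoutGraph GB GC i f).adj (cobase i f (f v')) x) := by
  obtain ⟨hi, hadj⟩ := hind
  refine ⟨Pushout.cobase_injective hi,
    fun c c' => (pushoutGraph_adj_cobase_iff hi (fun a a' => (hadj a a').2) hf c c').symm,
    Pushout.mk_inl_notMem_range_cobase hi hv, fun x hx => ?_, fun x hx => ?_⟩
  · obtain ⟨b, hb, rfl⟩ := Pushout.exists_eq_mk_inl_of_notMem_range_cobase hx
    rw [honly b hb]
  · rw [← Pushout.mk_inl_apply]
    exact pushoutGraph_adj_mk_inl_of_adj_imp hi hv hfold hx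
end

section
/- Let X and Y be finite connected graphs and let p : X → Y be a ×-homotopy equivalence having the right lifting property with respect to every unfold. Then p admits a section: there exists a graph map s : Y → X with p ∘ s equal to the identity of Y. -/
/-! If `g` is a homotopy inverse of `p`, a homotopy `F : Y × I_n → Y` from `p ∘ g` to the
identity lifts through `p` to a homotopy starting at `g`, and its end is a section of `p`.
The lift exists because `Y × I_n` folds down onto `Y × {0}` (fold `(y, k + 1)` onto `(y, k)`),
so `Y × I_n` is built from `Y × {0}` by finitely many unfolds, across each of which a partial
lift extends by the right lifting property. -/

def LoopGraph.induce {V : Type} (G : LoopGraph V) (S : Set V) : LoopGraph S where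
  adj x y := G.adj x y
  symm h := G.symm h

def IsGraphHomOn {V W : Type} (G : LoopGraph V) (H : LoopGraph W) (S : Set V) (f : V → W) :
    Prop :=
  ∀ ⦃x⦄, x ∈ S → ∀ ⦃y⦄, y ∈ S → G.adj x y → H.adj (f x) (f y)

lemma isUnfold_inclusion_insert {V : Type} (G : LoopGraph V) {S : Set V} {v v' : V}
    (hv : v ∉ S) (hv' : v' ∈ S) (hfold : ∀ b ∈ insert v S, G.adj v b → G.adj v' b) :
    IsUnfold (G.induce S) (G.induce (insert v S)) (Set.inclusion (Set.subset_insert v S)) := by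
  refine ⟨Set.inclusion_injective _, fun _ _ => Iff.rfl, ⟨v, Set.mem_insert v S⟩, ?_, ?_,
    ⟨v', hv'⟩, fun b hb => hfold b b.2 hb⟩
  · rintro ⟨a, ha⟩
    have hav : (a : V) = v := congrArg Subtype.val ha
    exact hv (hav ▸ a.2)
  · rintro ⟨b, rfl | hb⟩ hnew
    · rfl
    · exact absurd ⟨⟨b, hb⟩, rfl⟩ hnew

lemma foldsTo_prod_pathI_le {V : Type} [Fintype V] (G : LoopGraph V) (n : ℕ) {m : ℕ}
    (hm : m ≤ n) : FoldsTo (G.prod (pathI n)) {u | (u.2 : ℕ) ≤ m} := by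
  classical
  refine Nat.decreasingInduction
    (motive := fun k _ => FoldsTo (G.prod (pathI n)) {u | (u.2 : ℕ) ≤ k}) (fun k hk ih => ?_)
    (by simpa [Fin.is_le] using FoldsTo.univ (G := G.prod (pathI n))) hm
  have hlayer : ∀ T : Finset V,
      FoldsTo (G.prod (pathI n)) {u | (u.2 : ℕ) ≤ k ∨ ((u.2 : ℕ) = k + 1 ∧ u.1 ∉ T)} := by
    intro T
    induction T using Finset.induction with
    | empty => simpa [Nat.le_succ_iff] using ih
    | insert y T hyT ihT =>
      have hnbr : ∀ b ∈ {u : V × Fin (n + 1) | (u.2 : ℕ) ≤ k ∨ ((u.2 : ℕ) = k + 1 ∧ u.1 ∉ T)},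
          (G.prod (pathI n)).adj (y, ⟨k + 1, by omega⟩) b →
          (G.prod (pathI n)).adj (y, ⟨k, by omega⟩) b := by
        rintro ⟨z, t⟩ hb ⟨hzy, hlo, hhi⟩
        simp only [Set.mem_ofPred_eq] at hb hlo hhi
        exact ⟨hzy, by simp only; omega, by simp only; omega⟩
      convert ihT.step (Or.inr ⟨rfl, hyT⟩) (Or.inl le_rfl) (by simp [Fin.ext_iff]) hnbr using 1
      ext ⟨z, t⟩
      simp only [Set.mem_ofPred_eq, Finset.mem_insert, Set.mem_sdiff, Set.mem_singleton_iff,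
        Prod.mk.injEq, Fin.ext_iff]
      grind
  simpa using hlayer Finset.univ

namespace RLPunfolds

variable {X Y Z : Type} {GX : LoopGraph X} {GY : LoopGraph Y} {GZ : LoopGraph Z} {p : X → Y}
  {H : Z → Y}

lemma exists_extend_insert (hrlp : RLPunfolds GX GY p) (hH : IsGraphHom GZ GY H)
    {S : Set Z} {v v' : Z} (hv : v ∉ S) (hv' : v' ∈ S)
    (hfold : ∀ b ∈ insert v S, GZ.adj v b → GZ.adj v' b)
    {f : Z → X} (hf : IsGraphHomOn GZ GX S f) (hpf : ∀ z ∈ S, p (f z) = H z) :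
    ∃ f' : Z → X, IsGraphHomOn GZ GX (insert v S) f' ∧ (∀ z ∈ insert v S, p (f' z) = H z) ∧
      ∀ z ∈ S, f' z = f z := by
  classical
  obtain ⟨h, hh, hhf, hph⟩ := hrlp _ _ _ _ _ (isUnfold_inclusion_insert GZ hv hv' hfold)
    (fun z => f z) (fun z => H z) (fun x y hxy => hf x.2 y.2 hxy) (fun _ _ hxy => hH hxy)
    (fun z => hpf z z.2)
  refine ⟨fun z => if hz : z ∈ insert v S then h ⟨z, hz⟩ else f z, ?_, ?_, ?_⟩
  · intro x hx y hy hxy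
    simp only [dif_pos hx, dif_pos hy]
    exact hh hxy
  · intro z hz
    simp only [dif_pos hz]
    exact hph _
  · intro z hz
    simp only [dif_pos (Set.mem_insert_of_mem v hz)]
    exact hhf ⟨z, hz⟩

lemma exists_lift_of_foldsTo (hrlp : RLPunfolds GX GY p) (hH : IsGraphHom GZ GY H)
    {S : Set Z} (hS : FoldsTo GZ S) {f : Z → X} (hf : IsGraphHomOn GZ GX S f)
    (hpf : ∀ z ∈ S, p (f z) = H z) :
    ∃ f' : Z → X, IsGraphHom GZ GX f' ∧ (∀ z ∈ S, f' z = f z) ∧ ∀ z, p (f' z) = H z := by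
  induction hS generalizing f with
  | univ => exact ⟨f, fun x y => hf trivial trivial, fun _ _ => rfl, fun z => hpf z trivial⟩
  | @step S v v' _ hv hv' hne hfold ih =>
    have hins : insert v (S \ {v}) = S := Set.insert_sdiff_self_of_mem hv
    obtain ⟨f₁, hf₁, hpf₁, hf₁f⟩ := exists_extend_insert hrlp hH (S := S \ {v})
      (by simp) ⟨hv', hne.symm⟩ (hins ▸ hfold) hf hpf
    rw [hins] at hf₁ hpf₁
    obtain ⟨f', hf', hf'f₁, hpf'⟩ := ih hf₁ hpf₁
    exact ⟨f', hf', fun z hz => (hf'f₁ z hz.1).trans (hf₁f z hz), hpf'⟩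

lemma exists_homotopy_lift [Fintype Z] (hrlp : RLPunfolds GX GY p) {n : ℕ}
    {F : Z × Fin (n + 1) → Y} (hF : IsGraphHom (GZ.prod (pathI n)) GY F)
    {g : Z → X} (hg : IsGraphHom GZ GX g) (hpg : ∀ z, p (g z) = F (z, 0)) :
    ∃ G : Z × Fin (n + 1) → X, IsGraphHom (GZ.prod (pathI n)) GX G ∧
      (∀ z, G (z, 0) = g z) ∧ ∀ u, p (G u) = F u := by
  have hbase : ∀ u : Z × Fin (n + 1), (u.2 : ℕ) ≤ 0 → u = (u.1, 0) := fun u hu =>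
    Prod.ext rfl (Fin.ext (Nat.le_zero.mp hu))
  obtain ⟨G, hG, hGg, hpG⟩ := exists_lift_of_foldsTo hrlp hF
    (foldsTo_prod_pathI_le GZ n (Nat.zero_le n)) (f := fun u => g u.1)
    (fun _ _ _ _ hxy => hg hxy.1) (fun u hu => by rw [hpg, ← hbase u hu])
  exact ⟨G, hG, fun z => hGg (z, 0) (Nat.le_refl 0), hpG⟩

end RLPunfolds

theorem stmt10_general {X Y : Type} [Fintype Y] (GX : LoopGraph X) (GY : LoopGraph Y)
    (p : X → Y) (hp : IsHtpyEquiv GX GY p) (hrlp : RLPunfolds GX GY p) :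
    ∃ s : Y → X, IsGraphHom GY GX s ∧ ∀ y, p (s y) = y := by
  obtain ⟨-, g, hg, -, n, F, hF, hF0, hFn⟩ := hp
  obtain ⟨G, hG, -, hpG⟩ := hrlp.exists_homotopy_lift hF hg fun y => (hF0 y).symm
  exact ⟨fun y => G (y, Fin.last n), fun _ _ h => hG ⟨h, Nat.le_succ _, Nat.le_succ _⟩,
    fun y => (hpG _).trans (hFn y)⟩

/-- a ×-homotopy equivalence between finite connected graphs with the right
lifting property with respect to every unfold admits a section. -/
theorem stmt10 {X Y : Type} [Fintype X] [Fintype Y] (GX : LoopGraph X) (GY : LoopGraph Y)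
    (hX : GX.Connected) (hY : GY.Connected)
    (p : X → Y) (hp : IsHtpyEquiv GX GY p) (hrlp : RLPunfolds GX GY p) :
    ∃ s : Y → X, IsGraphHom GY GX s ∧ ∀ y, p (s y) = y :=
  stmt10_general GX GY p hp hrlp
end

section
/- There is no model structure (W, C, F) on the category of finite graphs in which W is the class of ×-homotopy equivalences and C ∩ W (the class of acyclic cofibrations) is the class of all finite compositions of unfolds. -/
/-- The class of finite compositions of unfolds (incl. the empty composition, i.e. identities). -/
inductive CompUnfolds : ∀ (A B : FinGraph), (Fin A.n → Fin B.n) → Prop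
  | id (A : FinGraph) : CompUnfolds A A (fun a => a)
  | unfold {A B : FinGraph} {f : Fin A.n → Fin B.n} :
      IsUnfold A.G B.G f → CompUnfolds A B f
  | comp {A B D : FinGraph} {f : Fin A.n → Fin B.n} {g : Fin B.n → Fin D.n} :
      CompUnfolds A B f → CompUnfolds B D g → CompUnfolds A D (g ∘ f)


/-!
Factor the diagonal `C₅ → C₅ × C₅` of the reflexive 5-cycle as an acyclic cofibration
`s : C₅ → P` followed by a fibration `p`. The first row of the cylinder `I_n × I_n` is included
in the whole cylinder by a composition of unfolds (fold the rows away one vertex at a time), so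
`p` lifts the homotopy `(t, a) ↦ (0, min t a mod 5)`, which starts at a constant path. The last
row of the lift is a path `K` in `P` whose two projections are the constant path (winding `0`)
and `a ↦ a mod 5` (winding `n`). The projections agree after precomposition with `s`, and
`s ∘ s'` is homotopic to the identity by a homotopy of some length `k`, so both windings are
within `2k` of the winding of `s' ∘ K`: one homotopy step changes the winding by at most `2`.
Hence `n ≤ 4k`, which fails for `n = 4k + 1`.
-/

theorem IsGraphHom.comp {U V W : Type} {G : LoopGraph U} {H : LoopGraph V} {L : LoopGraph W}
    {g : V → W} {f : U → V} (hg : IsGraphHom H L g) (hf : IsGraphHom G H f) :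
    IsGraphHom G L (g ∘ f) :=
  fun _ _ h => hg (hf h)

def LoopGraph.comap {V W : Type} (f : W → V) (G : LoopGraph V) : LoopGraph W where
  adj x y := G.adj (f x) (f y)
  symm h := G.symm h

theorem pathI_adj_refl {n : ℕ} (a : Fin (n + 1)) : (pathI n).adj a a := ⟨by omega, by omega⟩

theorem pathI_adj_castSucc_succ {n : ℕ} (i : Fin n) : (pathI n).adj i.castSucc i.succ := by
  simp only [pathI, Fin.val_castSucc, Fin.val_succ]
  omega

theorem isGraphHom_min (n : ℕ) :
    IsGraphHom ((pathI n).prod (pathI n)) (pathI n) fun x => min x.1 x.2 := by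
  rintro ⟨t, a⟩ ⟨t', a'⟩ ⟨⟨h₁, h₂⟩, ⟨h₃, h₄⟩⟩
  simp only [pathI, Fin.coe_min] at *
  omega

namespace FinGraph

abbrev path (n : ℕ) : FinGraph := ⟨n + 1, pathI n⟩

/-- Vertices are numbered through `finProdFinEquiv`, so `(x, y)` is vertex `y + Y.n * x`. -/
abbrev prod (X Y : FinGraph) : FinGraph :=
  ⟨X.n * Y.n, (X.G.prod Y.G).comap finProdFinEquiv.symm⟩

abbrev cylinder (n : ℕ) : FinGraph := (path n).prod (path n)

abbrev truncate (X : FinGraph) {j : ℕ} (hj : j ≤ X.n) : FinGraph :=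
  ⟨j, X.G.comap (Fin.castLE hj)⟩

def diag (X : FinGraph) : Fin X.n → Fin (X.prod X).n := fun x => finProdFinEquiv (x, x)

def fst (X Y : FinGraph) : Fin (X.prod Y).n → Fin X.n := fun z => (finProdFinEquiv.symm z).1

def snd (X Y : FinGraph) : Fin (X.prod Y).n → Fin Y.n := fun z => (finProdFinEquiv.symm z).2

variable {X Y : FinGraph}

theorem prod_adj_finProdFinEquiv {x x' : Fin X.n} {y y' : Fin Y.n} :
    (X.prod Y).G.adj (finProdFinEquiv (x, y)) (finProdFinEquiv (x', y')) ↔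
      X.G.adj x x' ∧ Y.G.adj y y' := by
  simp only [prod, LoopGraph.comap, LoopGraph.prod, Equiv.symm_apply_apply]

theorem isGraphHom_pair {V : Type} {G : LoopGraph V} {f : V → Fin X.n} {g : V → Fin Y.n}
    (hf : IsGraphHom G X.G f) (hg : IsGraphHom G Y.G g) :
    IsGraphHom G (X.prod Y).G fun v => finProdFinEquiv (f v, g v) :=
  fun _ _ h => prod_adj_finProdFinEquiv.mpr ⟨hf h, hg h⟩

theorem isGraphHom_diag : IsGraphHom X.G (X.prod X).G X.diag :=
  isGraphHom_pair (fun _ _ h => h) fun _ _ h => h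

theorem isGraphHom_fst : IsGraphHom (X.prod Y).G X.G (fst X Y) := fun _ _ h => h.1

theorem isGraphHom_snd : IsGraphHom (X.prod Y).G Y.G (snd X Y) := fun _ _ h => h.2

@[simp] theorem fst_diag (x : Fin X.n) : fst X X (X.diag x) = x := by simp [fst, diag]

@[simp] theorem snd_diag (x : Fin X.n) : snd X X (X.diag x) = x := by simp [snd, diag]

theorem isUnfold_truncate {v d : Fin X.n} (hdv : d < v)
    (hdom : ∀ b, b ≤ v → X.G.adj v b → X.G.adj d b) :
    IsUnfold (X.truncate v.isLt.le).G (X.truncate v.isLt).G Fin.castSucc := by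
  refine ⟨Fin.castSucc_injective _, fun _ _ => Iff.rfl, Fin.last _, ?_, ?_, ⟨d, hdv⟩, ?_⟩
  · rintro ⟨a, ha⟩
    exact Fin.castSucc_ne_last a ha
  · intro b hb
    rcases Fin.eq_castSucc_or_eq_last b with ⟨a, rfl⟩ | rfl
    · exact absurd ⟨a, rfl⟩ hb
    · rfl
  · intro b hb
    exact hdom _ (Nat.lt_succ_iff.mp b.isLt) hb

theorem compUnfolds_truncate {r : ℕ} (hr : r ≤ X.n)
    (hdom : ∀ v : Fin X.n, r ≤ v → ∃ d < v, ∀ b, b ≤ v → X.G.adj v b → X.G.adj d b) :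
    CompUnfolds (X.truncate hr) (X.truncate le_rfl) (Fin.castLE hr) := by
  suffices ∀ j (hrj : r ≤ j) (hj : j ≤ X.n),
      CompUnfolds (X.truncate hr) (X.truncate hj) (Fin.castLE hrj) from this _ hr le_rfl
  intro j hrj
  induction j, hrj using Nat.le_induction with
  | base => exact fun _ => .id _
  | succ j hrj ih =>
    intro hj
    obtain ⟨d, hdv, hd⟩ := hdom ⟨j, hj⟩ hrj
    exact .comp (ih (Nat.le_of_succ_le hj)) (.unfold (isUnfold_truncate hdv hd))

/-- Outside the first row, `(t, a)` is dominated by `(t - 1, a)`. -/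
theorem cylinder_dominated (n : ℕ) (v : Fin (cylinder n).n) (hv : n + 1 ≤ v) :
    ∃ d < v, ∀ b, b ≤ v → (cylinder n).G.adj v b → (cylinder n).G.adj d b := by
  obtain ⟨⟨t, a⟩, rfl⟩ := finProdFinEquiv.surjective v
  have ht : 1 ≤ (t : ℕ) := by
    by_contra! h
    simp only [finProdFinEquiv_apply_val, Nat.lt_one_iff.mp h, mul_zero, add_zero] at hv
    exact absurd hv (not_le.mpr a.isLt)
  refine ⟨finProdFinEquiv (⟨t - 1, (Nat.sub_le _ _).trans_lt t.isLt⟩, a), ?_, fun b hb hvb => ?_⟩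
  · rw [Fin.lt_def, finProdFinEquiv_apply_val, finProdFinEquiv_apply_val]
    exact Nat.add_lt_add_left
      (Nat.mul_lt_mul_of_pos_left (show (t : ℕ) - 1 < t by omega) (by simp)) _
  obtain ⟨⟨t', a'⟩, rfl⟩ := finProdFinEquiv.surjective b
  rw [prod_adj_finProdFinEquiv] at hvb ⊢
  have ht' : (t' : ℕ) < t + 1 := by
    rw [Fin.le_def, finProdFinEquiv_apply_val, finProdFinEquiv_apply_val] at hb
    refine Nat.lt_of_mul_lt_mul_left (a := n + 1) ?_
    have := a.isLt
    simp only [path] at hb ⊢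
    nlinarith
  simp only [path, pathI] at hvb ⊢
  omega

end FinGraph

theorem exists_lift_of_homotopy {P Y : FinGraph} {p : Fin P.n → Fin Y.n}
    (hp : ∀ (A B : FinGraph) (i : Fin A.n → Fin B.n), CompUnfolds A B i → HasLift A B P Y i p)
    {n : ℕ} {z : Fin P.n} (hz : P.G.adj z z) {g : Fin (n + 1) × Fin (n + 1) → Fin Y.n}
    (hg : IsGraphHom ((pathI n).prod (pathI n)) Y.G g) (hg0 : ∀ a, g (0, a) = p z) :
    ∃ K : Fin (n + 1) → Fin P.n,
      IsGraphHom (pathI n) P.G K ∧ ∀ a, p (K a) = g (Fin.last n, a) := by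
  have hr : n + 1 ≤ (FinGraph.cylinder n).n := Nat.le_mul_of_pos_right _ n.succ_pos
  have hrow : ∀ a : Fin (n + 1), Fin.castLE hr a = finProdFinEquiv (0, a) := fun a => by
    ext; simp
  obtain ⟨h, hh, -, hph⟩ :=
    hp _ _ _ ((FinGraph.cylinder n).compUnfolds_truncate hr (FinGraph.cylinder_dominated n))
      (fun _ => z) (fun x => g (finProdFinEquiv.symm x)) (fun _ _ _ => hz)
      (fun _ _ hxy => hg hxy) (fun a => by rw [hrow a, Equiv.symm_apply_apply, hg0])
  refine ⟨fun a => h (finProdFinEquiv (Fin.last n, a)), fun a b hab => hh ?_,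
    fun a => (hph _).trans (congrArg g (Equiv.symm_apply_apply _ _))⟩
  exact FinGraph.prod_adj_finProdFinEquiv.mpr ⟨pathI_adj_refl _, hab⟩

theorem Fin.sum_univ_succ_sub_castSucc {M : Type*} [AddCommGroup M] {n : ℕ}
    (f : Fin (n + 1) → M) : ∑ i : Fin n, (f i.succ - f i.castSucc) = f (Fin.last n) - f 0 := by
  have h₀ := Fin.sum_univ_succ f
  have h₁ := Fin.sum_univ_castSucc f
  rw [Finset.sum_sub_distrib]
  linear_combination (norm := abel) h₁ - h₀

theorem abs_sub_le_of_abs_succ_sub_le {k : ℕ} {f : Fin (k + 1) → ℤ} {c : ℤ}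
    (hf : ∀ i : Fin k, |f i.succ - f i.castSucc| ≤ c) : |f (Fin.last k) - f 0| ≤ k * c := by
  rw [← Fin.sum_univ_succ_sub_castSucc]
  calc |∑ i : Fin k, (f i.succ - f i.castSucc)|
      ≤ ∑ i : Fin k, |f i.succ - f i.castSucc| := Finset.abs_sum_le_sum_abs _ _
    _ ≤ ∑ _i : Fin k, c := Finset.sum_le_sum fun i _ => hf i
    _ = k * c := by simp

theorem ofNat_five_add_one (a : ℕ) : Fin.ofNat 5 (a + 1) = Fin.ofNat 5 a + 1 :=
  Fin.ext (by simp [Fin.val_add])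

def cycle5 : LoopGraph (Fin 5) where
  adj x y := x = y ∨ y = x + 1 ∨ x = y + 1
  symm := by rintro x y (h | h | h) <;> simp [h]

theorem isGraphHom_ofNat (n : ℕ) : IsGraphHom (pathI n) cycle5 fun a => Fin.ofNat 5 a := by
  rintro a b ⟨h₁, h₂⟩
  rcases (show (a : ℕ) = b ∨ (b : ℕ) = a + 1 ∨ (a : ℕ) = b + 1 by omega) with h | h | h
  · exact Or.inl (by simp only [h])
  · exact Or.inr (Or.inl (by simp only [h, ofNat_five_add_one]))
  · exact Or.inr (Or.inr (by simp only [h, ofNat_five_add_one]))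

def windStep (x y : Fin 5) : ℤ := if y = x + 1 then 1 else if x = y + 1 then -1 else 0

/-- The 5-cycle has girth 5, so no square of edges winds around it. -/
theorem windStep_sub_windStep {x x' y y' : Fin 5} (hx : cycle5.adj x x') (hy : cycle5.adj y y')
    (hxy : cycle5.adj x y) (hxy' : cycle5.adj x' y') :
    windStep y y' - windStep x x' = windStep x' y' - windStep x y := by
  revert x x' y y'
  simp only [cycle5]
  decide

theorem abs_windStep_le_one (x y : Fin 5) : |windStep x y| ≤ 1 := by
  revert x y
  decide

def winding {n : ℕ} (u : Fin (n + 1) → Fin 5) : ℤ :=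
  ∑ i : Fin n, windStep (u i.castSucc) (u i.succ)

theorem winding_const {n : ℕ} (x : Fin 5) : winding (fun _ : Fin (n + 1) => x) = 0 := by
  have : windStep x x = 0 := by revert x; decide
  simp [winding, this]

theorem winding_ofNat (n : ℕ) : winding (fun a : Fin (n + 1) => Fin.ofNat 5 a) = n := by
  have h : ∀ a : ℕ, windStep (Fin.ofNat 5 a) (Fin.ofNat 5 (a + 1)) = 1 := fun a => by
    rw [windStep, if_pos (ofNat_five_add_one a)]
  rw [winding]
  simp only [Fin.val_castSucc, Fin.val_succ, h]
  simp

theorem abs_winding_sub_le_two {n : ℕ} {u v : Fin (n + 1) → Fin 5}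
    (hu : IsGraphHom (pathI n) cycle5 u) (hv : IsGraphHom (pathI n) cycle5 v)
    (huv : ∀ a, cycle5.adj (u a) (v a)) : |winding v - winding u| ≤ 2 := by
  have hsq : ∀ i : Fin n,
      windStep (v i.castSucc) (v i.succ) - windStep (u i.castSucc) (u i.succ) =
        windStep (u i.succ) (v i.succ) - windStep (u i.castSucc) (v i.castSucc) := fun i =>
    windStep_sub_windStep (hu (pathI_adj_castSucc_succ i)) (hv (pathI_adj_castSucc_succ i))
      (huv _) (huv _)
  rw [winding, winding, ← Finset.sum_sub_distrib, Finset.sum_congr rfl fun i _ => hsq i,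
    Fin.sum_univ_succ_sub_castSucc (fun a => windStep (u a) (v a))]
  calc _ ≤ |windStep (u (Fin.last n)) (v (Fin.last n))| + |windStep (u 0) (v 0)| := abs_sub _ _
    _ ≤ 2 := by linarith [abs_windStep_le_one (u (Fin.last n)) (v (Fin.last n)),
      abs_windStep_le_one (u 0) (v 0)]

theorem abs_winding_sub_le_of_homotopy {n k : ℕ} {F : Fin (n + 1) × Fin (k + 1) → Fin 5}
    (hF : IsGraphHom ((pathI n).prod (pathI k)) cycle5 F) :
    |winding (fun a => F (a, Fin.last k)) - winding (fun a => F (a, 0))| ≤ 2 * k := by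
  have hrow : ∀ t, IsGraphHom (pathI n) cycle5 (fun a => F (a, t)) := fun t _ _ h =>
    hF ⟨h, pathI_adj_refl t⟩
  rw [mul_comm]
  exact abs_sub_le_of_abs_succ_sub_le (f := fun t => winding (fun a => F (a, t))) fun t =>
    abs_winding_sub_le_two (hrow _) (hrow _) fun a =>
      hF ⟨pathI_adj_refl a, pathI_adj_castSucc_succ t⟩

theorem abs_winding_comp_sub_le_of_homotopy {V : Type} {G : LoopGraph V} {r : V → V} {k : ℕ}
    {F : V × Fin (k + 1) → V} (hF : IsGraphHom (G.prod (pathI k)) G F)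
    (hF0 : ∀ x, F (x, 0) = r x) (hFk : ∀ x, F (x, Fin.last k) = x)
    {q₀ q₁ : V → Fin 5} (hq₀ : IsGraphHom G cycle5 q₀) (hq₁ : IsGraphHom G cycle5 q₁)
    (hq : ∀ x, q₀ (r x) = q₁ (r x)) {n : ℕ} {K : Fin (n + 1) → V}
    (hK : IsGraphHom (pathI n) G K) :
    |winding (q₁ ∘ K) - winding (q₀ ∘ K)| ≤ 4 * k := by
  have hbound : ∀ q : V → Fin 5, IsGraphHom G cycle5 q →
      |winding (q ∘ K) - winding (q ∘ r ∘ K)| ≤ 2 * k := by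
    intro q hqG
    have := abs_winding_sub_le_of_homotopy (F := fun x => q (F (K x.1, x.2)))
      fun _ _ h => hqG (hF ⟨hK h.1, h.2⟩)
    simpa only [hF0, hFk, Function.comp_def] using this
  have h₀ := hbound q₀ hq₀
  have h₁ := hbound q₁ hq₁
  rw [show q₀ ∘ r ∘ K = q₁ ∘ r ∘ K from funext fun a => hq (K a), abs_sub_comm] at h₀
  linarith [abs_sub_le (winding (q₁ ∘ K)) (winding (q₁ ∘ r ∘ K)) (winding (q₀ ∘ K))]

/-- there is no model structure on the category of finite graphs whose weak
equivalences are the ×-homotopy equivalences and whose acyclic cofibrations (`C ∩ W`) are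
exactly the finite compositions of unfolds. -/
theorem stmt12 :
    ¬ ∃ (Cof Fib : MorClass), ModelStructure Whe Cof Fib ∧
      ∀ (A B : FinGraph) (f : Fin A.n → Fin B.n),
        (Cof A B f ∧ Whe A B f) ↔ CompUnfolds A B f := by
  rintro ⟨Cof, Fib, ms, hiff⟩
  let C : FinGraph := ⟨5, cycle5⟩
  obtain ⟨P, s, p, -, ⟨hs, s', -, -, k, F, hF, hF0, hFk⟩, hpF, hps⟩ :=
    ms.fact_cw_f C (C.prod C) C.diag FinGraph.isGraphHom_diag
  have hp := ms.f_hom _ _ _ hpF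
  have hz : C.G.adj 0 0 := Or.inl rfl
  obtain ⟨K, hK, hpK⟩ := exists_lift_of_homotopy
    (fun A B i hi => ms.lift_cw_f A B P _ i p ((hiff A B i).mpr hi).1 ((hiff A B i).mpr hi).2 hpF)
    (hs hz) (FinGraph.isGraphHom_pair (fun _ _ _ => hz)
      ((isGraphHom_ofNat (4 * k + 1)).comp (isGraphHom_min (4 * k + 1))))
    (fun a => by simp [hps, FinGraph.diag])
  have hwind := abs_winding_comp_sub_le_of_homotopy hF hF0 hFk
    (FinGraph.isGraphHom_fst.comp hp) (FinGraph.isGraphHom_snd.comp hp) (fun x => by simp [hps]) hK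
  have hK₀ : (FinGraph.fst C C ∘ p) ∘ K = fun _ => 0 := funext fun a => by
    simp [hpK, FinGraph.fst]
  have hK₁ : (FinGraph.snd C C ∘ p) ∘ K = fun a : Fin (4 * k + 1 + 1) => Fin.ofNat 5 a :=
    funext fun a => by simp [hpK, FinGraph.snd, Fin.le_last]
  rw [hK₀, hK₁, winding_const, winding_ofNat] at hwind
  push_cast at hwind
  linarith [(abs_le.mp hwind).2]
end
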